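/- arXiv:2102.10063 — 4 statements merged into one kernel-verified Lean document; each statement's English description precedes it below -/
import Mathlib

section
/- Let S be a finite type, ε ∈ [0,1) a real number, κ : S → PMF S a Markov kernel, F ⊆ S, and d : S → ℕ a function such that: (i) d(s) = 0 if and only if s ∈ F; (ii) κ(s) = PMF.pure s for every s ∈ F; (iii) for every s ∉ F, the total mass that κ(s) assigns to the set {s' : d(s') + 1 = d(s)} is at least 1 − ε; and (iv) for every s and every s' in the support of κ(s), d(s') ≤ d(s) + 1. Then for every initial state s₀ and every natural number k with d(s₀) ≤ k, the k-step distribution μ_k started from PMF.pure s₀ satisfies μ_k(F) ≥ ∑_{i=0}^{⌊(k − d(s₀))/2⌋} (k choose i) · ε^i · (1−ε)^{k−i}. -/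
/-
Let `B k d` be the probability that among `k` independent trials, each failing with probability
`ε`, the number `i` of failures satisfies `d + 2 i ≤ k`. Pascal's rule gives
`B (k+1) (d+1) = (1 - ε) B k d + ε B k (d+2)`, the one-step recursion of a walk that moves down
with probability `1 - ε` and up otherwise. Conditioning on the first step of the chain, the
intended transition (mass at least `1 - ε`) lowers the distance by one, and every other transition
raises it by at most one; since `B k` is antitone in the distance, induction on `k` shows that the
probability of being in `F` after `k` steps from `s` is at least `B k (d s)`.
-/

open scoped ENNReal

/-- The `k`-step distributions of the Markov chain with kernel `κ`
starting from the initial distribution `μ`. -/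
noncomputable def kstep {S : Type*} (κ : S → PMF S) (μ : PMF S) : ℕ → PMF S
  | 0 => μ
  | k + 1 => (kstep κ μ k).bind κ

open Finset

def binomialTerm (ε : ℝ) (k i : ℕ) : ℝ :=
  k.choose i * ε ^ i * (1 - ε) ^ (k - i)

/-- The sum over `i ≤ (k - d) / 2`, written so that it vanishes when `k < d` (with truncated
subtraction the range form would not). -/
def binomialBound (ε : ℝ) (k d : ℕ) : ℝ :=
  ∑ i ∈ range (k + 1) with d + 2 * i ≤ k, binomialTerm ε k i

section Binomial

variable {ε : ℝ}

lemma binomialTerm_nonneg (hε0 : 0 ≤ ε) (hε1 : ε ≤ 1) (k i : ℕ) : 0 ≤ binomialTerm ε k i := by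
  unfold binomialTerm
  have : 0 ≤ 1 - ε := by linarith
  positivity

lemma binomialTerm_zero (k : ℕ) : binomialTerm ε (k + 1) 0 = (1 - ε) * binomialTerm ε k 0 := by
  simp only [binomialTerm, Nat.choose_zero_right, Nat.cast_one, pow_zero, one_mul, tsub_zero,
    pow_succ]
  ring

lemma binomialTerm_succ_succ (k i : ℕ) :
    binomialTerm ε (k + 1) (i + 1) =
      ε * binomialTerm ε k i + (1 - ε) * binomialTerm ε k (i + 1) := by
  unfold binomialTerm
  rw [Nat.choose_succ_succ', Nat.cast_add, Nat.add_sub_add_right]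
  rcases lt_or_ge i k with hik | hki
  · rw [show k - i = k - (i + 1) + 1 by omega]
    ring
  · rw [Nat.choose_eq_zero_of_lt (by omega : k < i + 1), Nat.sub_eq_zero_of_le hki]
    ring

lemma sum_binomialTerm (k : ℕ) : ∑ i ∈ range (k + 1), binomialTerm ε k i = 1 := by
  have h := (add_pow ε (1 - ε) k).symm
  rw [add_sub_cancel, one_pow] at h
  rw [← h]
  exact sum_congr rfl fun i _ => by unfold binomialTerm; ring

lemma binomialBound_nonneg (hε0 : 0 ≤ ε) (hε1 : ε ≤ 1) (k d : ℕ) : 0 ≤ binomialBound ε k d :=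
  sum_nonneg fun i _ => binomialTerm_nonneg hε0 hε1 k i

lemma binomialBound_le_one (hε0 : 0 ≤ ε) (hε1 : ε ≤ 1) (k d : ℕ) : binomialBound ε k d ≤ 1 := by
  rw [← sum_binomialTerm (ε := ε) k]
  exact sum_le_sum_of_subset_of_nonneg (filter_subset _ _)
    fun i _ _ => binomialTerm_nonneg hε0 hε1 k i

lemma binomialBound_antitone (hε0 : 0 ≤ ε) (hε1 : ε ≤ 1) (k : ℕ) :
    Antitone (binomialBound ε k) := fun d d' hd =>
  sum_le_sum_of_subset_of_nonneg (monotone_filter_right _ fun i h => by omega)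
    fun i _ _ => binomialTerm_nonneg hε0 hε1 k i

lemma binomialBound_of_lt {k d : ℕ} (h : k < d) : binomialBound ε k d = 0 :=
  sum_eq_zero fun i hi => absurd (mem_filter.1 hi).2 (by omega)

lemma binomialBound_eq_sum_range {k d : ℕ} (h : d ≤ k) :
    binomialBound ε k d = ∑ i ∈ range ((k - d) / 2 + 1), binomialTerm ε k i := by
  unfold binomialBound
  congr 1
  ext i
  simp only [mem_filter, mem_range]
  omega

lemma binomialBound_eq_sum_range_filter (k : ℕ) {n : ℕ} (d : ℕ) (hn : k < n) :
    binomialBound ε k d = ∑ i ∈ range n with d + 2 * i ≤ k, binomialTerm ε k i := by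
  unfold binomialBound
  congr 1
  ext i
  simp only [mem_filter, mem_range]
  omega

lemma binomialBound_succ (k d : ℕ) :
    binomialBound ε (k + 1) (d + 1) =
      (1 - ε) * binomialBound ε k d + ε * binomialBound ε k (d + 2) := by
  rw [binomialBound_eq_sum_range_filter k d (by omega : k < k + 1 + 1)]
  simp only [binomialBound, sum_filter]
  rw [sum_range_succ' _ (k + 1), sum_range_succ' _ (k + 1), mul_add, mul_sum, mul_sum,
    add_right_comm _ ((1 - ε) * _), ← sum_add_distrib]
  congr 1
  · refine sum_congr rfl fun i _ => ?_
    rw [binomialTerm_succ_succ]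
    split_ifs <;> first | omega | ring
  · rw [binomialTerm_zero]
    split_ifs <;> first | omega | ring

end Binomial

lemma ENNReal.ofReal_one_sub_mul_add_mul {ε a b : ℝ} (hε0 : 0 ≤ ε) (hε1 : ε ≤ 1) (ha : 0 ≤ a)
    (hb : 0 ≤ b) :
    ENNReal.ofReal ((1 - ε) * a + ε * b) =
      ENNReal.ofReal (1 - ε) * ENNReal.ofReal a +
        (1 - ENNReal.ofReal (1 - ε)) * ENNReal.ofReal b := by
  have h1ε : 0 ≤ 1 - ε := by linarith
  rw [ENNReal.ofReal_add (by positivity) (by positivity), ENNReal.ofReal_mul h1ε,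
    ENNReal.ofReal_mul hε0, ← ENNReal.ofReal_one, ← ENNReal.ofReal_sub _ h1ε,
    _root_.sub_sub_cancel 1 ε]

lemma PMF.mul_add_one_sub_mul_le_tsum {α : Type*} (p : PMF α) {G : Set α} {q A B : ℝ≥0∞}
    {f : α → ℝ≥0∞} (hBA : B ≤ A) (hq : q ≤ p.toOuterMeasure G) (hA : ∀ a ∈ G, A ≤ f a)
    (hB : ∀ a ∈ p.support, B ≤ f a) :
    q * A + (1 - q) * B ≤ ∑' a, p a * f a := by
  have hq1 : q ≤ 1 := hq.trans <| (p.toOuterMeasure.mono (Set.subset_univ G)).trans_eq <|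
    (p.toOuterMeasure_apply_eq_one_iff _).2 (Set.subset_univ _)
  have hpoint : ∀ a, p a * B + G.indicator p a * (A - B) ≤ p a * f a := by
    intro a
    by_cases hpa : p a = 0
    · simp [hpa]
    by_cases haG : a ∈ G
    · rw [Set.indicator_of_mem haG, ← mul_add, add_tsub_cancel_of_le hBA]
      exact mul_le_mul_right (hA a haG) _
    · rw [Set.indicator_of_notMem haG, zero_mul, add_zero]
      exact mul_le_mul_right (hB a hpa) _
  calc q * A + (1 - q) * B = q * (B + (A - B)) + (1 - q) * B := by
        rw [add_tsub_cancel_of_le hBA]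
    _ = ((1 - q) + q) * B + q * (A - B) := by ring
    _ = B + q * (A - B) := by rw [tsub_add_cancel_of_le hq1, one_mul]
    _ ≤ B + p.toOuterMeasure G * (A - B) := by gcongr
    _ = ∑' a, (p a * B + G.indicator p a * (A - B)) := by
        rw [ENNReal.tsum_add, ENNReal.tsum_mul_right, ENNReal.tsum_mul_right, p.tsum_coe, one_mul,
          PMF.toOuterMeasure_apply]
    _ ≤ ∑' a, p a * f a := ENNReal.tsum_le_tsum hpoint

section kstep

variable {S : Type*} (κ : S → PMF S)

lemma kstep_pure_succ (s : S) (k : ℕ) :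
    kstep κ (PMF.pure s) (k + 1) = (κ s).bind fun s' => kstep κ (PMF.pure s') k := by
  induction k with
  | zero => exact (PMF.pure_bind _ _).trans (PMF.bind_pure _).symm
  | succ k ih =>
    change (kstep κ (PMF.pure s) (k + 1)).bind κ = _
    rw [ih, PMF.bind_bind]
    rfl

lemma kstep_pure_of_eq_pure {s : S} (hs : κ s = PMF.pure s) (k : ℕ) :
    kstep κ (PMF.pure s) k = PMF.pure s := by
  induction k with
  | zero => rfl
  | succ k ih =>
    change (kstep κ (PMF.pure s) k).bind κ = _
    rw [ih, PMF.pure_bind, hs]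

end kstep

theorem ofReal_binomialBound_le_kstep {S : Type*} {ε : ℝ} (hε0 : 0 ≤ ε) (hε1 : ε ≤ 1)
    {κ : S → PMF S} {F : Set S} {d : S → ℕ} (hdF : ∀ s, d s = 0 → s ∈ F)
    (hκF : ∀ s ∈ F, κ s = PMF.pure s)
    (hκd : ∀ s ∉ F, ENNReal.ofReal (1 - ε) ≤ (κ s).toOuterMeasure {s' | d s' + 1 = d s})
    (hκ_supp : ∀ s, ∀ s' ∈ (κ s).support, d s' ≤ d s + 1) (k : ℕ) (s : S) :
    ENNReal.ofReal (binomialBound ε k (d s)) ≤ (kstep κ (PMF.pure s) k).toOuterMeasure F := by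
  have h_mem : ∀ k, ∀ s ∈ F,
      ENNReal.ofReal (binomialBound ε k (d s)) ≤ (kstep κ (PMF.pure s) k).toOuterMeasure F := by
    intro k s hs
    rw [kstep_pure_of_eq_pure κ (hκF s hs), PMF.toOuterMeasure_pure_apply, if_pos hs]
    exact ENNReal.ofReal_le_one.2 (binomialBound_le_one hε0 hε1 _ _)
  induction k generalizing s with
  | zero =>
    by_cases hs : s ∈ F
    · exact h_mem 0 s hs
    rw [binomialBound_of_lt (Nat.pos_of_ne_zero fun h => hs (hdF s h)), ENNReal.ofReal_zero]
    exact zero_le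
  | succ k ih =>
    by_cases hs : s ∈ F
    · exact h_mem _ s hs
    obtain ⟨e, he⟩ := Nat.exists_eq_succ_of_ne_zero fun h => hs (hdF s h)
    rw [kstep_pure_succ, PMF.toOuterMeasure_bind_apply, he, binomialBound_succ,
      ENNReal.ofReal_one_sub_mul_add_mul hε0 hε1 (binomialBound_nonneg hε0 hε1 _ _)
        (binomialBound_nonneg hε0 hε1 _ _)]
    refine (κ s).mul_add_one_sub_mul_le_tsum ?_ (hκd s hs) ?_ ?_
    · exact ENNReal.ofReal_le_ofReal (binomialBound_antitone hε0 hε1 k (by omega))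
    · intro s' hs'
      have hs'e : d s' + 1 = e + 1 := hs'.trans he
      rw [← Nat.add_right_cancel hs'e]
      exact ih s'
    · intro s' hs'
      refine le_trans (ENNReal.ofReal_le_ofReal (binomialBound_antitone hε0 hε1 k ?_)) (ih s')
      have := hκ_supp s s' hs'
      omega

theorem stmt_0_general {S : Type*} (ε : ℝ) (hε0 : 0 ≤ ε) (hε1 : ε < 1)
    (κ : S → PMF S) (F : Set S) (d : S → ℕ)
    (h1 : ∀ s, d s = 0 ↔ s ∈ F)
    (h2 : ∀ s ∈ F, κ s = PMF.pure s)
    (h3 : ∀ s ∉ F, ENNReal.ofReal (1 - ε) ≤ (κ s).toOuterMeasure {s' | d s' + 1 = d s})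
    (h4 : ∀ s, ∀ s' ∈ (κ s).support, d s' ≤ d s + 1)
    (s₀ : S) (k : ℕ) (hk : d s₀ ≤ k) :
    ENNReal.ofReal (∑ i ∈ Finset.range ((k - d s₀) / 2 + 1),
        (k.choose i : ℝ) * ε ^ i * (1 - ε) ^ (k - i)) ≤
      (kstep κ (PMF.pure s₀) k).toOuterMeasure F := by
  have := ofReal_binomialBound_le_kstep hε0 hε1.le (fun s => (h1 s).1) h2 h3 h4 k s₀
  rwa [binomialBound_eq_sum_range hk] at this

theorem stmt_0 {S : Type*} [Fintype S] (ε : ℝ) (hε0 : 0 ≤ ε) (hε1 : ε < 1)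
    (κ : S → PMF S) (F : Set S) (d : S → ℕ)
    (h1 : ∀ s, d s = 0 ↔ s ∈ F)
    (h2 : ∀ s ∈ F, κ s = PMF.pure s)
    (h3 : ∀ s ∉ F, ENNReal.ofReal (1 - ε) ≤ (κ s).toOuterMeasure {s' | d s' + 1 = d s})
    (h4 : ∀ s, ∀ s' ∈ (κ s).support, d s' ≤ d s + 1)
    (s₀ : S) (k : ℕ) (hk : d s₀ ≤ k) :
    ENNReal.ofReal (∑ i ∈ Finset.range ((k - d s₀) / 2 + 1),
        (k.choose i : ℝ) * ε ^ i * (1 - ε) ^ (k - i)) ≤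
      (kstep κ (PMF.pure s₀) k).toOuterMeasure F :=
  stmt_0_general ε hε0 hε1 κ F d h1 h2 h3 h4 s₀ k hk
end

section
/- Let (Ω, 𝓕, P) be a probability space with a filtration (𝓕_t)_{t∈ℕ}, and let (X_t)_{t∈ℕ} be an (𝓕_t)-adapted sequence of ℕ-valued random variables such that: (i) X_0 = d almost surely for a fixed d ∈ ℕ; (ii) X_{t+1} ≤ X_t + 1 almost surely for every t; (iii) almost surely on the event {X_t = 0} one has X_{t+1} = 0; and (iv) for every t, almost surely on the event {X_t ≥ 1}, the conditional probability P(X_{t+1} = X_t − 1 | 𝓕_t) is at least 1 − ε, where ε ∈ [0,1). Then for every natural number k with k ≥ d, P(X_k = 0) ≥ ∑_{i=0}^{⌊(k−d)/2⌋} (k choose i) · ε^i · (1−ε)^{k−i}. -/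
/-!
Call step `t` a success if the distance drops by one or is already zero. Conditionally on `ℱ t`,
success has probability at least `1 - ε`, so by induction on `t`, using Pascal's rule for the
binomial tail, the number of failures among the first `t` steps is stochastically dominated by a
`Binomial(t, ε)` variable. Pathwise, every success lowers `X` by one (or keeps it at `0`) and every
failure raises it by at most one, so `X k + k ≤ d + 2 · #failures` unless `X k = 0`; hence at most
`⌊(k - d) / 2⌋` failures force `X k = 0`.
-/

open MeasureTheory Finset

/-- The probability that a `Binomial(n, ε)` variable is `< j`; the paper's `B(k, d, ε)` is
`binomLowerTail ε k ((k - d) / 2 + 1)`. -/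
noncomputable def binomLowerTail (ε : ℝ) (n j : ℕ) : ℝ :=
  ∑ i ∈ range j, (n.choose i : ℝ) * ε ^ i * (1 - ε) ^ (n - i)

section binomLowerTail

variable (ε : ℝ)

lemma binomLowerTail_zero_right (n : ℕ) : binomLowerTail ε n 0 = 0 := sum_range_zero _

lemma binomLowerTail_zero_succ (j : ℕ) : binomLowerTail ε 0 (j + 1) = 1 := by
  simp [binomLowerTail, sum_range_succ']

lemma choose_mul_pow_mul_pow_succ_sub (n i : ℕ) :
    (n.choose i : ℝ) * ε ^ i * (1 - ε) ^ (n + 1 - i) =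
      (1 - ε) * ((n.choose i : ℝ) * ε ^ i * (1 - ε) ^ (n - i)) := by
  rcases le_or_gt i n with h | h
  · rw [Nat.sub_add_comm h, pow_succ]; ring
  · simp [Nat.choose_eq_zero_of_lt h]

lemma binomLowerTail_succ_succ (n j : ℕ) :
    binomLowerTail ε (n + 1) (j + 1) =
      (1 - ε) * binomLowerTail ε n (j + 1) + ε * binomLowerTail ε n j := by
  have pascal : ∀ i, ((n + 1).choose (i + 1) : ℝ) * ε ^ (i + 1) * (1 - ε) ^ (n + 1 - (i + 1)) =
      (n.choose (i + 1) : ℝ) * ε ^ (i + 1) * (1 - ε) ^ (n + 1 - (i + 1)) +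
        ε * ((n.choose i : ℝ) * ε ^ i * (1 - ε) ^ (n - i)) := by
    intro i
    rw [Nat.choose_succ_succ', Nat.cast_add, Nat.add_sub_add_right]
    ring
  simp only [binomLowerTail, mul_sum, ← choose_mul_pow_mul_pow_succ_sub]
  rw [sum_range_succ', sum_range_succ' _ j]
  simp only [pascal, sum_add_distrib]
  simp only [Nat.reduceSubDiff, Nat.choose_zero_right, Nat.cast_one, pow_zero, mul_one, tsub_zero,
    one_mul]
  ring

end binomLowerTail

lemma mul_measureReal_le_measureReal_inter_of_le_condExp {Ω : Type*} {m m0 : MeasurableSpace Ω}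
    (hm : m ≤ m0) {μ : Measure Ω} [IsFiniteMeasure μ] {C D : Set Ω} (hC : MeasurableSet[m] C)
    (hD : MeasurableSet D) {c : ℝ} (hc : ∀ᵐ ω ∂μ, ω ∈ C → c ≤ μ[D.indicator 1 | m] ω) :
    c * μ.real C ≤ μ.real (C ∩ D) :=
  calc c * μ.real C = ∫ _ in C, c ∂μ := by rw [setIntegral_const, smul_eq_mul, mul_comm]
    _ ≤ ∫ ω in C, μ[D.indicator 1 | m] ω ∂μ :=
      setIntegral_mono_on_ae (integrable_const c).integrableOn integrable_condExp.integrableOn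
        (hm C hC) hc
    _ = ∫ ω in C, D.indicator 1 ω ∂μ :=
      setIntegral_condExp hm ((integrable_const 1).indicator hD) hC
    _ = μ.real (C ∩ D) := by
      rw [integral_indicator_one hD, measureReal_restrict_apply hD, Set.inter_comm]

open Classical in
noncomputable def failureCount {Ω : Type*} (S : ℕ → Set Ω) (t : ℕ) (ω : Ω) : ℕ :=
  #{s ∈ range t | ω ∉ S s}

section failureCount

variable {Ω : Type*} {S : ℕ → Set Ω}

lemma failureCount_zero (ω : Ω) : failureCount S 0 ω = 0 := by simp [failureCount]

open Classical in
lemma failureCount_succ (t : ℕ) (ω : Ω) :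
    failureCount S (t + 1) ω = failureCount S t ω + if ω ∈ S t then 0 else 1 := by
  simp only [failureCount, card_filter, sum_range_succ, ite_not]

lemma adapted_failureCount {m0 : MeasurableSpace Ω} {ℱ : Filtration ℕ m0}
    (hS : ∀ t, MeasurableSet[ℱ (t + 1)] (S t)) : Adapted ℱ (failureCount S) := by
  classical
  intro t
  unfold failureCount
  simp only [card_filter]
  refine Finset.measurable_sum _ fun s hs => Measurable.ite ?_ measurable_const measurable_const
  exact (ℱ.mono (mem_range.1 hs) _ (hS s)).compl

end failureCount

theorem binomLowerTail_le_measureReal_failureCount_lt {Ω : Type*} {m0 : MeasurableSpace Ω}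
    {P : Measure Ω} [IsProbabilityMeasure P] {ℱ : Filtration ℕ m0} {S : ℕ → Set Ω}
    (hS : ∀ t, MeasurableSet[ℱ (t + 1)] (S t)) {ε : ℝ} (hε0 : 0 ≤ ε) (hε1 : ε ≤ 1)
    (hstep : ∀ t C, MeasurableSet[ℱ t] C → (1 - ε) * P.real C ≤ P.real (C ∩ S t)) (t j : ℕ) :
    binomLowerTail ε t j ≤ P.real {ω | failureCount S t ω < j} := by
  induction t generalizing j with
  | zero =>
    cases j with
    | zero => simp [binomLowerTail_zero_right]
    | succ j => simp [binomLowerTail_zero_succ, failureCount_zero]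
  | succ t ih =>
    cases j with
    | zero => simp [binomLowerTail_zero_right]
    | succ j =>
      set A := {ω | failureCount S t ω < j}
      set C := {ω | failureCount S t ω < j + 1}
      have hA : MeasurableSet[ℱ t] A := measurableSet_lt (adapted_failureCount hS t) measurable_const
      have hC : MeasurableSet[ℱ t] C := measurableSet_lt (adapted_failureCount hS t) measurable_const
      have hAC : A ⊆ C := fun ω h => Nat.lt_succ_of_lt h
      have hsub : A ∪ (C \ A) ∩ S t ⊆ {ω | failureCount S (t + 1) ω < j + 1} := by
        rintro ω (h | ⟨⟨h, -⟩, hS⟩) <;>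
          simp only [A, C, Set.mem_ofPred_eq, failureCount_succ] at h ⊢
        · split <;> omega
        · simpa [hS] using h
      have hdisj : Disjoint A ((C \ A) ∩ S t) :=
        Set.disjoint_left.2 fun ω hA h => h.1.2 hA
      have hsplit : P.real (C \ A) = P.real C - P.real A := by
        have := measureReal_sdiff_add_inter (μ := P) (s := C) (ℱ.le t _ hA)
        rw [Set.inter_eq_self_of_subset_right hAC] at this
        linarith
      calc binomLowerTail ε (t + 1) (j + 1)
          = (1 - ε) * binomLowerTail ε t (j + 1) + ε * binomLowerTail ε t j :=
            binomLowerTail_succ_succ ε t j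
        _ ≤ (1 - ε) * P.real C + ε * P.real A := by
            gcongr <;> exact ih _
        _ = P.real A + (1 - ε) * P.real (C \ A) := by rw [hsplit]; ring
        _ ≤ P.real A + P.real ((C \ A) ∩ S t) := by gcongr; exact hstep t _ (hC.diff hA)
        _ = P.real (A ∪ (C \ A) ∩ S t) :=
            (measureReal_union hdisj ((ℱ.le t _ (hC.diff hA)).inter (ℱ.le _ _ (hS t)))).symm
        _ ≤ _ := measureReal_mono hsub

section descent

variable {Ω : Type*} {m0 : MeasurableSpace Ω} {ℱ : Filtration ℕ m0} {X : ℕ → Ω → ℕ}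

def descendsOrAbsorbed (X : ℕ → Ω → ℕ) (t : ℕ) : Set Ω :=
  {ω | X (t + 1) ω + 1 = X t ω} ∪ {ω | X t ω = 0}

lemma measurableSet_descendsOrAbsorbed (hX : Adapted ℱ X) (t : ℕ) :
    MeasurableSet[ℱ (t + 1)] (descendsOrAbsorbed X t) :=
  have hXt : Measurable[ℱ (t + 1)] (X t) := (hX t).mono (ℱ.mono t.le_succ) le_rfl
  (measurableSet_eq_fun ((hX (t + 1)).add_const 1) hXt).union (hXt (measurableSet_singleton 0))

lemma mul_measureReal_le_measureReal_inter_descendsOrAbsorbed {P : Measure Ω}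
    [IsFiniteMeasure P] (hX : Adapted ℱ X) {ε : ℝ} (hε0 : 0 ≤ ε) {t : ℕ}
    (hdec : ∀ᵐ ω ∂P, 1 ≤ X t ω →
      1 - ε ≤ (P[({ω' | X (t + 1) ω' + 1 = X t ω'}).indicator (fun _ => (1 : ℝ)) | ℱ t]) ω)
    {C : Set Ω} (hC : MeasurableSet[ℱ t] C) :
    (1 - ε) * P.real C ≤ P.real (C ∩ descendsOrAbsorbed X t) := by
  set D := {ω' | X (t + 1) ω' + 1 = X t ω'}
  set C₁ := C ∩ {ω | 1 ≤ X t ω}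
  have hC₁ : MeasurableSet[ℱ t] C₁ := hC.inter (measurableSet_le measurable_const (hX t))
  have hD : MeasurableSet D :=
    measurableSet_eq_fun ((hX (t + 1)).mono (ℱ.le _) le_rfl |>.add_const 1)
      ((hX t).mono (ℱ.le _) le_rfl)
  have hdescent : (1 - ε) * P.real C₁ ≤ P.real (C₁ ∩ D) :=
    mul_measureReal_le_measureReal_inter_of_le_condExp (ℱ.le t) hC₁ hD
      (by filter_upwards [hdec] with ω h hω using h hω.2)
  have hsplit := measureReal_sdiff_add_inter (μ := P) (s := C) (ℱ.le t _ hC₁)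
  rw [Set.inter_eq_self_of_subset_right Set.inter_subset_left] at hsplit
  have hdisj : Disjoint (C \ C₁) (C₁ ∩ D) := Set.disjoint_sdiff_left.mono_right Set.inter_subset_left
  have hsub : (C \ C₁) ∪ (C₁ ∩ D) ⊆ C ∩ descendsOrAbsorbed X t := by
    rintro ω (⟨hω, hω₁⟩ | ⟨⟨hω, -⟩, hωD⟩)
    · exact ⟨hω, Or.inr (by simpa [C₁, hω] using hω₁)⟩
    · exact ⟨hω, Or.inl hωD⟩
  calc (1 - ε) * P.real C = (1 - ε) * P.real (C \ C₁) + (1 - ε) * P.real C₁ := by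
        rw [← hsplit, mul_add]
    _ ≤ P.real (C \ C₁) + P.real (C₁ ∩ D) := by
        gcongr
        exact mul_le_of_le_one_left measureReal_nonneg (by linarith)
    _ = P.real ((C \ C₁) ∪ (C₁ ∩ D)) :=
        (measureReal_union hdisj ((ℱ.le t _ hC₁).inter hD)).symm
    _ ≤ _ := measureReal_mono hsub

lemma eq_zero_or_add_le_add_two_mul_failureCount {ω : Ω}
    (hinc : ∀ t, X (t + 1) ω ≤ X t ω + 1) (habs : ∀ t, X t ω = 0 → X (t + 1) ω = 0) (t : ℕ) :
    X t ω = 0 ∨ X t ω + t ≤ X 0 ω + 2 * failureCount (descendsOrAbsorbed X) t ω := by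
  induction t with
  | zero => simp [failureCount_zero]
  | succ t ih =>
    rcases ih with h | h
    · exact Or.inl (habs t h)
    rw [failureCount_succ]
    split_ifs with hs
    · rcases hs with hdown | hzero
      · right; simp only [Set.mem_ofPred_eq] at hdown; omega
      · exact Or.inl (habs t hzero)
    · right; have := hinc t; omega

end descent

theorem stmt_1 {Ω : Type*} {m0 : MeasurableSpace Ω} (P : Measure Ω)
    [IsProbabilityMeasure P] (ℱ : Filtration ℕ m0)
    (X : ℕ → Ω → ℕ) (hadapted : Adapted ℱ X)
    (d : ℕ) (ε : ℝ) (hε0 : 0 ≤ ε) (hε1 : ε < 1)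
    (hX0 : ∀ᵐ ω ∂P, X 0 ω = d)
    (hinc : ∀ t, ∀ᵐ ω ∂P, X (t + 1) ω ≤ X t ω + 1)
    (habs : ∀ t, ∀ᵐ ω ∂P, X t ω = 0 → X (t + 1) ω = 0)
    (hdec : ∀ t, ∀ᵐ ω ∂P, 1 ≤ X t ω →
      1 - ε ≤ (P[({ω' | X (t + 1) ω' + 1 = X t ω'}).indicator (fun _ => (1 : ℝ)) | ℱ t]) ω)
    (k : ℕ) (hk : d ≤ k) :
    ENNReal.ofReal (∑ i ∈ Finset.range ((k - d) / 2 + 1),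
        (k.choose i : ℝ) * ε ^ i * (1 - ε) ^ (k - i)) ≤
      P {ω | X k ω = 0} := by
  have hbinom : binomLowerTail ε k ((k - d) / 2 + 1) ≤
      P.real {ω | failureCount (descendsOrAbsorbed X) k ω < (k - d) / 2 + 1} :=
    binomLowerTail_le_measureReal_failureCount_lt (measurableSet_descendsOrAbsorbed hadapted)
      hε0 hε1.le (fun t _ hC ↦ mul_measureReal_le_measureReal_inter_descendsOrAbsorbed
        hadapted hε0 (hdec t) hC) k _
  have hreach :
      {ω | failureCount (descendsOrAbsorbed X) k ω < (k - d) / 2 + 1} ≤ᵐ[P] {ω | X k ω = 0} := by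
    filter_upwards [hX0, ae_all_iff.2 hinc, ae_all_iff.2 habs] with ω h0 hinc habs hF
    have := eq_zero_or_add_le_add_two_mul_failureCount hinc habs k
    change failureCount _ k ω < _ at hF
    change X k ω = 0
    omega
  calc _ ≤ ENNReal.ofReal (P.real _) := ENNReal.ofReal_le_ofReal hbinom
    _ = P _ := ofReal_measureReal
    _ ≤ P {ω | X k ω = 0} := measure_mono_ae hreach
end

section
/- Let k, d ∈ ℕ and let x : ℕ → ℕ be a sequence with x(0) = d such that for every t < k, x(t+1) ≤ x(t) + 1. Suppose the number of 'unintended' steps, i.e., the cardinality i of the set {t : t < k and x(t+1) + 1 ≠ x(t)}, satisfies d + 2·i ≤ k (equivalently i ≤ ⌊(k−d)/2⌋ and k ≥ d). Then x(k) = 0. -/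
/-! Each intended step lowers `x` by one and every other step raises it by at most one, so after
`k` steps with `i` unintended ones, `x k + (k - i) ≤ d + i`; together with `d + 2 i ≤ k` this
forces `x k = 0`. -/

open Finset

theorem add_card_intended_le_add_card_unintended (x : ℕ → ℕ) (n : ℕ)
    (hstep : ∀ t < n, x (t + 1) ≤ x t + 1) :
    x n + #{t ∈ range n | x (t + 1) + 1 = x t} ≤ x 0 + #{t ∈ range n | x (t + 1) + 1 ≠ x t} := by
  induction n with
  | zero => simp
  | succ n ih =>
    have hlast := hstep n n.lt_add_one
    specialize ih fun t ht => hstep t (ht.trans n.lt_add_one)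
    simp only [card_filter, sum_range_succ] at ih ⊢
    split_ifs <;> omega

theorem stmt_4 (k d : ℕ) (x : ℕ → ℕ) (hx0 : x 0 = d)
    (hstep : ∀ t < k, x (t + 1) ≤ x t + 1)
    (hbad : d + 2 * ((Finset.range k).filter (fun t => x (t + 1) + 1 ≠ x t)).card ≤ k) :
    x k = 0 := by
  have hpotential := add_card_intended_le_add_card_unintended x k hstep
  have hsplit :
      #{t ∈ range k | x (t + 1) + 1 = x t} + #{t ∈ range k | x (t + 1) + 1 ≠ x t} = k := by
    simpa using card_filter_add_card_filter_not (s := range k) (fun t => x (t + 1) + 1 = x t)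
  omega
end

section
/- Let S be a finite type, κ : S → PMF S a Markov kernel, F ⊆ S, and d : S → ℕ a function such that: (i) d(s) = 0 if and only if s ∈ F; (ii) κ(s) = PMF.pure s for every s ∈ F; and (iii) for every s ∉ F, the total mass that κ(s) assigns to the set {s' : d(s') + 1 = d(s)} equals 1. Then for every initial state s₀ and every natural number k with d(s₀) ≤ k, the k-step distribution μ_k started from PMF.pure s₀ satisfies μ_k(F) = 1. -/
open scoped ENNReal

section

variable {S : Type*} {κ : S → PMF S} {d : S → ℕ}

lemma le_sub_of_mem_support_kstep (hκ : ∀ s, ∀ s' ∈ (κ s).support, d s' ≤ d s - 1)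
    {μ : PMF S} {n : ℕ} (hμ : ∀ s ∈ μ.support, d s ≤ n) :
    ∀ k, ∀ s ∈ (kstep κ μ k).support, d s ≤ n - k
  | 0 => hμ
  | k + 1 => by
    intro s' hs'
    rw [kstep, PMF.mem_support_bind_iff] at hs'
    obtain ⟨s, hs, hss'⟩ := hs'
    have := le_sub_of_mem_support_kstep hκ hμ k s hs
    have := hκ s s' hss'
    omega

lemma le_pred_of_mem_support_kernel {F : Set S} (hF : ∀ s ∈ F, d s = 0)
    (hpure : ∀ s ∈ F, κ s = PMF.pure s)
    (hdrop : ∀ s ∉ F, (κ s).toOuterMeasure {s' | d s' + 1 = d s} = 1) :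
    ∀ s, ∀ s' ∈ (κ s).support, d s' ≤ d s - 1 := by
  intro s s' hs'
  by_cases hs : s ∈ F
  · rw [hpure s hs, PMF.support_pure, Set.mem_singleton_iff] at hs'
    subst hs'
    simp [hF s' hs]
  · have : d s' + 1 = d s := (PMF.toOuterMeasure_apply_eq_one_iff _ _).mp (hdrop s hs) hs'
    omega

end

theorem stmt_7_general {S : Type*}
    (κ : S → PMF S) (F : Set S) (d : S → ℕ)
    (h1 : ∀ s, d s = 0 ↔ s ∈ F)
    (h2 : ∀ s ∈ F, κ s = PMF.pure s)
    (h3 : ∀ s ∉ F, (κ s).toOuterMeasure {s' | d s' + 1 = d s} = 1)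
    (s₀ : S) (k : ℕ) (hk : d s₀ ≤ k) :
    (kstep κ (PMF.pure s₀) k).toOuterMeasure F = 1 := by
  have hκ := le_pred_of_mem_support_kernel (fun s hs ↦ (h1 s).2 hs) h2 h3
  have hμ : ∀ s ∈ (PMF.pure s₀).support, d s ≤ d s₀ := by simp
  rw [PMF.toOuterMeasure_apply_eq_one_iff]
  intro s hs
  have := le_sub_of_mem_support_kstep hκ hμ k s hs
  exact (h1 s).1 (by omega)

theorem stmt_7 {S : Type*} [Fintype S]
    (κ : S → PMF S) (F : Set S) (d : S → ℕ)
    (h1 : ∀ s, d s = 0 ↔ s ∈ F)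
    (h2 : ∀ s ∈ F, κ s = PMF.pure s)
    (h3 : ∀ s ∉ F, (κ s).toOuterMeasure {s' | d s' + 1 = d s} = 1)
    (s₀ : S) (k : ℕ) (hk : d s₀ ≤ k) :
    (kstep κ (PMF.pure s₀) k).toOuterMeasure F = 1 :=
  stmt_7_general κ F d h1 h2 h3 s₀ k hk
end
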